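/- Let F be a field. Every automorphism f of L₃ = Lei₃(3,F) with f(e₁) − e₁ ∈ span{e₂,e₃} can be written uniquely as f = z_{λ,μ} ∘ j_σ for some λ, μ ∈ F and σ ∈ F^×, where z_{λ,μ}(x₁e₁+x₂e₂+x₃e₃) = x₁e₁ + x₂e₂ + (x₁λ + x₂μ + x₃)e₃ and j_σ is the automorphism with j_σ(e₁) = e₁ + (σ−1)e₂, j_σ(e₂) = σe₂, j_σ(e₃) = σe₃. In particular, with T = { z_{λ,μ} } and J = { j_σ }, one has S = TJ and T ∩ J = {id}, where S is the group of automorphisms f with f(e₁) − e₁ ∈ span{e₂,e₃}. -/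
import Mathlib


/-- The bracket of the 3-dimensional Leibniz algebra `L₃ = Lei₃(3,F)` on `F³`:
`[x,y] = x₁(y₁+y₂)·e₃`, i.e. `[e₁,e₁] = [e₁,e₂] = e₃` and all other products of
basis vectors vanish. -/
def l3b (F : Type*) [Field F] (x y : Fin 3 → F) : Fin 3 → F :=
  ![0, 0, x 0 * (y 0 + y 1)]

/-- The standard basis vector `e₁ = (1,0,0)` of `F³`. -/
def e₁ (F : Type*) [Field F] : Fin 3 → F := ![1, 0, 0]

/-- The standard basis vector `e₂ = (0,1,0)` of `F³`. -/
def e₂ (F : Type*) [Field F] : Fin 3 → F := ![0, 1, 0]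

/-- The standard basis vector `e₃ = (0,0,1)` of `F³`. -/
def e₃ (F : Type*) [Field F] : Fin 3 → F := ![0, 0, 1]

/-- An automorphism of `L₃`: a bijective linear map preserving the bracket. -/
def IsL3Aut {F : Type*} [Field F] (f : (Fin 3 → F) →ₗ[F] (Fin 3 → F)) : Prop :=
  Function.Bijective f ∧ ∀ x y, f (l3b F x y) = l3b F (f x) (f y)


/-- The linear map `z_{λ,μ} : F³ → F³`,
`z_{λ,μ}(x₁e₁ + x₂e₂ + x₃e₃) = x₁e₁ + x₂e₂ + (x₁λ + x₂μ + x₃)e₃`. -/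
def zmap (F : Type*) [Field F] (l μ : F) : (Fin 3 → F) →ₗ[F] (Fin 3 → F) where
  toFun x := ![x 0, x 1, x 0 * l + x 1 * μ + x 2]
  map_add' x y := by
    funext i
    fin_cases i <;> simp [Pi.add_apply] <;> ring
  map_smul' c x := by
    funext i
    fin_cases i <;> simp [Pi.smul_apply, smul_eq_mul] <;> ring

/-- The linear map `j_σ : F³ → F³` with `j_σ(e₁) = e₁ + (σ-1)e₂`,
`j_σ(e₂) = σe₂`, `j_σ(e₃) = σe₃`. -/
def jmap (F : Type*) [Field F] (σ : F) : (Fin 3 → F) →ₗ[F] (Fin 3 → F) where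
  toFun x := ![x 0, x 0 * (σ - 1) + x 1 * σ, x 2 * σ]
  map_add' x y := by
    funext i
    fin_cases i <;> simp [Pi.add_apply] <;> ring
  map_smul' c x := by
    funext i
    fin_cases i <;> simp [Pi.smul_apply, smul_eq_mul] <;> ring

lemma key_decomp {F : Type*} [Field F] (x : Fin 3 → F) :
    x = x 0 • e₁ F + x 1 • e₂ F + x 2 • e₃ F := by
  funext i; fin_cases i <;> simp [e₁, e₂, e₃]

/-- every automorphism `f` of `L₃` with `f(e₁) - e₁ ∈ span{e₂,e₃}`
(i.e. every `f ∈ S`) can be written uniquely as `f = z_{λ,μ} ∘ j_σ` with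
`λ, μ ∈ F`, `σ ∈ F^×`; so `S = TJ`, and moreover `T ∩ J = {id}`. -/
theorem S_eq_TJ {F : Type*} [Field F] (f : (Fin 3 → F) →ₗ[F] (Fin 3 → F))
    (hf : IsL3Aut f) (hS : f (e₁ F) - e₁ F ∈ Submodule.span F {e₂ F, e₃ F}) :
    (∃! p : F × F × F, p.2.2 ≠ 0 ∧ f = (zmap F p.1 p.2.1).comp (jmap F p.2.2)) ∧
    (∀ l μ σ : F, σ ≠ 0 → zmap F l μ = jmap F σ → zmap F l μ = LinearMap.id) := by
  obtain ⟨hbij, hbr⟩ := hf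
  have lb11 : l3b F (e₁ F) (e₁ F) = e₃ F := by
    funext i; fin_cases i <;> simp [l3b, e₁, e₃]
  have lb12 : l3b F (e₁ F) (e₂ F) = e₃ F := by
    funext i; fin_cases i <;> simp [l3b, e₁, e₂, e₃]
  have lb21 : l3b F (e₂ F) (e₁ F) = 0 := by
    funext i; fin_cases i <;> simp [l3b, e₁, e₂]
  set A := f (e₁ F) with hA
  set B := f (e₂ F) with hB
  have h0 : A 0 = 1 := by
    rw [Submodule.mem_span_pair] at hS
    obtain ⟨a, b, hab⟩ := hS
    have h := congrFun hab 0
    simp only [Pi.add_apply, Pi.smul_apply, Pi.sub_apply, smul_eq_mul] at h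
    rw [show e₂ F 0 = 0 from rfl, show e₃ F 0 = 0 from rfl,
        show e₁ F 0 = 1 from rfl] at h
    linear_combination -h
  set σ := 1 + A 1 with hσdef
  have he3 : f (e₃ F) = ![0, 0, σ] := by
    have h := hbr (e₁ F) (e₁ F)
    rw [lb11, ← hA] at h
    rw [h]
    funext i; fin_cases i <;> simp [l3b, h0, hσdef]
  have hσ : σ ≠ 0 := by
    intro h
    have h3 : f (e₃ F) = f 0 := by
      rw [he3, map_zero]
      funext i; fin_cases i <;> simp [h]
    have h4 := congrFun (hbij.1 h3) 2
    simp [e₃] at h4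
  have hB01 : B 0 + B 1 = σ := by
    have h := hbr (e₁ F) (e₂ F)
    rw [lb12, he3, ← hA, ← hB] at h
    have h2 := congrFun h 2
    simp [l3b] at h2
    linear_combination -h2 - (B 0 + B 1) * h0
  have hB0 : B 0 = 0 := by
    have h := hbr (e₂ F) (e₁ F)
    rw [lb21, map_zero, ← hA, ← hB] at h
    have h2 := congrFun h.symm 2
    simp [l3b] at h2
    rcases h2 with h2 | h2
    · exact h2
    · exact absurd (by linear_combination h2 - h0) hσ
  have hB1 : B 1 = σ := by linear_combination hB01 - hB0
  have hA' : f (e₁ F) = ![1, σ - 1, A 2] := by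
    rw [← hA]
    funext i; fin_cases i <;> simp [h0, hσdef]
  have hB' : f (e₂ F) = ![0, σ, B 2] := by
    rw [← hB]
    funext i; fin_cases i <;> simp [hB0, hB1]
  set μ0 := B 2 / σ with hμ0
  set lam0 := A 2 - (σ - 1) * μ0 with hlam0
  have hcomp : ∀ l μ s : F,
      ((zmap F l μ).comp (jmap F s)) (e₁ F) = ![1, s - 1, l + (s - 1) * μ] ∧
      ((zmap F l μ).comp (jmap F s)) (e₂ F) = ![0, s, s * μ] := by
    intro l μ s
    constructor <;> (funext i; fin_cases i <;> (simp [zmap, jmap, e₁, e₂]; try ring))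
  constructor
  · refine ⟨⟨lam0, μ0, σ⟩, ⟨hσ, ?_⟩, ?_⟩
    · apply LinearMap.ext; intro x
      conv_lhs => rw [key_decomp x]
      rw [map_add, map_add, map_smul, map_smul, map_smul, hA', hB', he3]
      funext i
      fin_cases i <;>
        (simp [zmap, jmap, e₁, e₂, e₃, hlam0, hμ0]; try field_simp; try ring)
    · rintro ⟨l, μ, s⟩ ⟨hs, heq⟩
      obtain ⟨hc1, hc2⟩ := hcomp l μ s
      rw [← heq] at hc1 hc2
      rw [hA'] at hc1
      rw [hB'] at hc2
      have e11 := congrFun hc1 1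
      have e12 := congrFun hc1 2
      have e22 := congrFun hc2 2
      simp at e11 e12 e22
      have hsσ : s = σ := by linear_combination -e11
      subst hsσ
      have hμ : μ = μ0 := by
        rw [hμ0]
        field_simp
        linear_combination -e22
      have hl : l = lam0 := by
        rw [hlam0, ← hμ]
        linear_combination -e12
      simp [hμ, hl]
  · intro l μ σ' hσ' h
    have h1 := LinearMap.congr_fun h (e₁ F)
    have h2 := LinearMap.congr_fun h (e₂ F)
    have e12 := congrFun h1 2
    have e22 := congrFun h2 2
    simp [zmap, jmap, e₁, e₂] at e12 e22
    apply LinearMap.ext; intro x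
    funext i
    fin_cases i <;> simp [zmap, e12, e22]
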